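/- arXiv:2002.01057 — 3 statements merged into one kernel-verified Lean document; each statement's English description precedes it below -/
import Mathlib

section
/- Let κ be a nonzero real number and let D_κ = {λ ∈ ℂ : Re((κ² + λ²)²) < 0}. Then the intersection of the imaginary axis {λ ∈ ℂ : Re λ = 0} with the closure of D_κ is exactly the two-point set {iκ, −iκ}. (In particular, the boundary of D_κ cuts the imaginary axis precisely at the points ±iκ.) -/
private lemma calc_re (κ t : ℝ) :
    (((κ:ℂ)^2 + (Complex.I*κ + t)^2)^2).re = t^2*(t^2-4*κ^2) := by
  simp [pow_two, Complex.mul_re, Complex.mul_im, Complex.add_re, Complex.add_im]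
  ring

private lemma calc_re' (κ t : ℝ) :
    (((κ:ℂ)^2 + (-(Complex.I*κ) + t)^2)^2).re = t^2*(t^2-4*κ^2) := by
  simp [pow_two, Complex.mul_re, Complex.mul_im, Complex.add_re, Complex.add_im]
  ring

private lemma mem_closure_pt (κ : ℝ) (hκ : κ ≠ 0) (w : ℂ)
    (hw : ∀ t : ℝ, (κ:ℂ)^2 + (w + t)^2 = (κ:ℂ)^2 + (Complex.I*κ + t)^2 ∨
      (κ:ℂ)^2 + (w + t)^2 = (κ:ℂ)^2 + (-(Complex.I*κ) + t)^2) :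
    w ∈ closure {z : ℂ | (((κ : ℂ) ^ 2 + z ^ 2) ^ 2).re < 0} := by
  rw [Metric.mem_closure_iff]
  intro ε hε
  set t : ℝ := min (ε/2) |κ| with ht
  have ht0 : 0 < t := lt_min (by linarith) (abs_pos.mpr hκ)
  refine ⟨w + t, ?_, ?_⟩
  · have hre : (((κ:ℂ)^2 + (w + t)^2)^2).re = t^2*(t^2-4*κ^2) := by
      rcases hw t with h | h <;> rw [h] <;> [exact calc_re κ t; exact calc_re' κ t]
    have htκ : t^2 < 4*κ^2 := by
      have h1 : t ≤ |κ| := min_le_right _ _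
      have h2 : t^2 ≤ κ^2 := by
        calc t^2 ≤ |κ|^2 := by nlinarith
        _ = κ^2 := sq_abs κ
      have : (0:ℝ) < κ^2 := by positivity
      nlinarith
    show (((κ:ℂ)^2 + (w + t)^2)^2).re < 0
    rw [hre]
    exact mul_neg_of_pos_of_neg (by positivity) (by linarith)
  · have : dist w (w + (t:ℂ)) = t := by
      rw [Complex.dist_eq]
      simp [abs_of_pos ht0]
    rw [this]
    calc t ≤ ε/2 := min_le_left _ _
    _ < ε := by linarith

/-- For `κ ≠ 0` real, the imaginary axis meets the closure of
`D_κ = {λ : Re((κ² + λ²)²) < 0}` exactly at the two points `±iκ`. -/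
theorem imaginary_axis_meets_closure_Dkappa (κ : ℝ) (hκ : κ ≠ 0) :
    {z : ℂ | z.re = 0} ∩ closure {z : ℂ | (((κ : ℂ) ^ 2 + z ^ 2) ^ 2).re < 0}
      = {Complex.I * (κ : ℂ), -(Complex.I * (κ : ℂ))} := by
  ext z
  constructor
  · rintro ⟨hre, hcl⟩
    have hle : (((κ : ℂ) ^ 2 + z ^ 2) ^ 2).re ≤ 0 := by
      have hclosed : IsClosed {w : ℂ | (((κ : ℂ) ^ 2 + w ^ 2) ^ 2).re ≤ 0} := by
        apply isClosed_le _ continuous_const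
        exact Complex.continuous_re.comp (by continuity)
      have hsub : {w : ℂ | (((κ : ℂ) ^ 2 + w ^ 2) ^ 2).re < 0} ⊆
          {w : ℂ | (((κ : ℂ) ^ 2 + w ^ 2) ^ 2).re ≤ 0} := fun w hw => by
        simp only [Set.mem_setOf_eq] at hw ⊢; exact le_of_lt hw
      exact closure_minimal hsub hclosed hcl
    have hre0 : z.re = 0 := hre
    have hcalc : (((κ:ℂ)^2 + z^2)^2).re = (κ^2 - z.im^2)^2 := by
      simp [pow_two, Complex.mul_re, Complex.mul_im, Complex.add_re, Complex.add_im, hre0]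
      ring
    have h0 : (κ^2 - z.im^2)^2 = 0 := le_antisymm (hcalc ▸ hle) (sq_nonneg _)
    have him : z.im^2 = κ^2 := by nlinarith [sq_nonneg (κ^2 - z.im^2)]
    have : z.im = κ ∨ z.im = -κ := sq_eq_sq_iff_eq_or_eq_neg.mp him
    rcases this with h | h
    · left
      apply Complex.ext <;> simp [hre0, h]
    · right
      apply Complex.ext <;> simp [hre0, h]
  · rintro (rfl | rfl)
    · refine ⟨by simp, mem_closure_pt κ hκ _ (fun t => Or.inl rfl)⟩
    · refine ⟨by simp, mem_closure_pt κ hκ _ (fun t => Or.inr rfl)⟩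
end

section
/- Let κ be a nonzero real number, ε ∈ (0, π/2), r > 0, and λ ∈ ℂ satisfy −λ² − 2κ² = r·e^{iε}. Then Re λ · Im λ < 0, and the ratio α = Re λ / Im λ satisfies −tan(ε)/2 < α < 0. In particular, every point of the rotated branch cut other than the branch points ±i√2|κ| lies within the angle tan⁻¹(tan(ε)/2) of the imaginary axis, on the side where Re λ and Im λ have opposite signs. -/
open Real

/-- For `κ ≠ 0`, `ε ∈ (0, π/2)`, `r > 0` and `λ ∈ ℂ` with `−λ² − 2κ² = r·e^{iε}`:
`Re λ · Im λ < 0` and the ratio `α = Re λ / Im λ` satisfies `−tan(ε)/2 < α < 0`. -/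
theorem rotated_branch_cut_near_imaginary_axis (κ ε r : ℝ) (hκ : κ ≠ 0)
    (hε : ε ∈ Set.Ioo 0 (π / 2)) (hr : 0 < r) (l : ℂ)
    (hl : -l ^ 2 - 2 * (κ : ℂ) ^ 2 = (r : ℂ) * Complex.exp (ε * Complex.I)) :
    l.re * l.im < 0 ∧ -Real.tan ε / 2 < l.re / l.im ∧ l.re / l.im < 0 := by
  obtain ⟨hε0, hε1⟩ := hε
  have hc : 0 < Real.cos ε := Real.cos_pos_of_mem_Ioo ⟨by linarith [Real.pi_pos], hε1⟩
  have hs : 0 < Real.sin ε := Real.sin_pos_of_pos_of_lt_pi hε0 (by linarith [Real.pi_pos])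
  rw [show ((ε:ℂ) * Complex.I) = ((ε:ℝ):ℂ) * Complex.I from rfl, Complex.exp_mul_I] at hl
  have hre := congrArg Complex.re hl
  have him := congrArg Complex.im hl
  set x := l.re
  set y := l.im
  simp [Complex.ext_iff, pow_two, Complex.mul_re, Complex.mul_im, Complex.cos_ofReal_re,
    Complex.sin_ofReal_re] at hre him
  have hκ2 : 0 < κ * κ := mul_self_pos.mpr hκ
  have hxy : x * y < 0 := by nlinarith [mul_pos hr hs]
  have hy : y ≠ 0 := by
    intro h; rw [h, mul_zero] at hxy; exact lt_irrefl 0 hxy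
  have hyy : 0 < y * y := mul_self_pos.mpr hy
  have hq : x / y = x * y / (y * y) := by field_simp
  have hrs : r * Real.sin ε = -(2 * (x * y)) := by linarith
  have hrc : r * Real.cos ε = y * y - x * x - 2 * (κ * κ) := by linarith
  have e1 : r * Real.sin ε * (y * y) = -(2 * (x * y)) * (y * y) := by rw [hrs]
  have e2 : r * Real.cos ε * (x * y) = (y * y - x * x - 2 * (κ * κ)) * (x * y) := by rw [hrc]
  refine ⟨hxy, ?_, ?_⟩
  · rw [Real.tan_eq_sin_div_cos, hq,
      show -(Real.sin ε / Real.cos ε) / 2 = -Real.sin ε / (2 * Real.cos ε) by ring,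
      div_lt_div_iff₀ (by positivity) hyy]
    nlinarith [e1, e2, hr, hxy, hκ2, mul_nonneg (neg_nonneg.mpr hxy.le) (mul_self_nonneg x),
      mul_pos (neg_pos.mpr hxy) hκ2]
  · rw [hq]
    exact div_neg_of_neg_of_pos hxy hyy
end

section
/- Let κ be a nonzero real number. For ε ∈ (0, π/2) define ν_ε : ℂ → ℂ by ν_ε(λ) = e^{iε/2}·i·((λ² + 2κ²)·e^{−iε})^(1/2), where (·)^(1/2) is the principal branch of the complex square root (this ν_ε is the square root of −λ² − 2κ² taken with argument convention [ε, 2π + ε)). Then: (i) ν_ε(λ)² = −λ² − 2κ² for every λ ∈ ℂ and every ε ∈ (0, π/2); and (ii) there exists ε₀ ∈ (0, π/2) such that for every ε ∈ (0, ε₀), ν_ε is complex differentiable (analytic) at every point of closure(D_κ) \ {i√2|κ|, −i√2|κ|}, and Im ν_ε(λ) ≥ 0 for every λ ∈ D_κ, where D_κ = {λ ∈ ℂ : Re(i·(κ² + λ²)²) > 0}. -/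
open Complex Real

lemma cpow_half_sq' (w : ℂ) : (w ^ ((1:ℂ)/2)) ^ 2 = w := by
  rcases eq_or_ne w 0 with h | h
  · simp [h, Complex.zero_cpow (by norm_num : (1:ℂ)/2 ≠ 0)]
  · rw [sq, ← Complex.cpow_add _ _ h]
    norm_num

lemma cpow_half_re_nonneg' (w : ℂ) : 0 ≤ (w ^ ((1:ℂ)/2)).re := by
  rcases eq_or_ne w 0 with h | h
  · simp [h, Complex.zero_cpow (by norm_num : (1:ℂ)/2 ≠ 0)]
  · rw [Complex.cpow_def_of_ne_zero h, Complex.exp_re]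
    apply mul_nonneg (Real.exp_nonneg _)
    have him : (Complex.log w * ((1:ℂ)/2)).im = w.arg / 2 := by
      simp [Complex.mul_im, Complex.log_im]
      ring
    rw [him]
    apply Real.cos_nonneg_of_mem_Icc
    constructor
    · have := Complex.neg_pi_lt_arg w; linarith
    · have := Complex.arg_le_pi w; linarith

lemma re_formula (κ : ℝ) (z : ℂ) :
    (Complex.I * ((κ : ℂ) ^ 2 + z ^ 2) ^ 2).re
      = -2 * ((z ^ 2 + 2 * (κ:ℂ) ^ 2).re - κ ^ 2) * (z ^ 2 + 2 * (κ:ℂ) ^ 2).im := by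
  simp [pow_two, Complex.mul_re, Complex.mul_im, Complex.add_re, Complex.add_im]
  ring

/-- The square root of `−λ² − 2κ²` with argument convention `[ε, 2π + ε)`:
`ν_ε(λ) = e^{iε/2}·i·((λ² + 2κ²)·e^{−iε})^(1/2)`, with the principal branch `(·)^(1/2)`. -/
noncomputable def nuRot (κ ε : ℝ) (l : ℂ) : ℂ :=
  Complex.exp (Complex.I * ε / 2) * Complex.I *
    ((l ^ 2 + 2 * (κ : ℂ) ^ 2) * Complex.exp (-(Complex.I * ε))) ^ ((1 : ℂ) / 2)

/-- For `κ ≠ 0`: (i) `ν_ε(λ)² = −λ² − 2κ²` for every `λ ∈ ℂ` and every `ε ∈ (0, π/2)`;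
(ii) there is `ε₀ ∈ (0, π/2)` such that for all `ε ∈ (0, ε₀)`, `ν_ε` is complex
differentiable at every point of `closure(D_κ) \ {±i√2|κ|}` and `Im ν_ε(λ) ≥ 0`
for every `λ ∈ D_κ`, where `D_κ = {λ : Re(i·(κ² + λ²)²) > 0}`. -/
theorem rotated_square_root_properties (κ : ℝ) (hκ : κ ≠ 0) :
    (∀ ε ∈ Set.Ioo (0 : ℝ) (π / 2), ∀ l : ℂ,
      (nuRot κ ε l) ^ 2 = -l ^ 2 - 2 * (κ : ℂ) ^ 2) ∧
    (∃ ε₀ ∈ Set.Ioo (0 : ℝ) (π / 2), ∀ ε ∈ Set.Ioo (0 : ℝ) ε₀,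
      (∀ l ∈ closure {z : ℂ | 0 < (Complex.I * ((κ : ℂ) ^ 2 + z ^ 2) ^ 2).re} \
          {Complex.I * ((Real.sqrt 2 * |κ| : ℝ) : ℂ),
            -(Complex.I * ((Real.sqrt 2 * |κ| : ℝ) : ℂ))},
        DifferentiableAt ℂ (nuRot κ ε) l) ∧
      (∀ l ∈ {z : ℂ | 0 < (Complex.I * ((κ : ℂ) ^ 2 + z ^ 2) ^ 2).re},
        0 ≤ (nuRot κ ε l).im)) := by
  constructor
  · -- part (i)
    intro ε hε l
    have hone : Complex.exp (Complex.I * ε / 2) ^ 2 * Complex.exp (-(Complex.I * ε)) = 1 := by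
      rw [sq, ← Complex.exp_add, ← Complex.exp_add,
        show (Complex.I * (ε:ℂ) / 2 + Complex.I * ε / 2 + -(Complex.I * ε)) = 0 by ring,
        Complex.exp_zero]
    simp only [nuRot, mul_pow, cpow_half_sq', Complex.I_sq]
    linear_combination (-(l ^ 2 + 2 * (κ:ℂ) ^ 2)) * hone
  · -- part (ii)
    refine ⟨π/4, Set.mem_Ioo.mpr ⟨by positivity, by linarith [Real.pi_pos]⟩, ?_⟩
    intro ε hε
    have hε0 : 0 < ε := hε.1
    have hεlt : ε < π/2 := lt_trans hε.2 (by linarith [Real.pi_pos])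
    -- closure containment
    have hclosure : closure {z : ℂ | 0 < (Complex.I * ((κ : ℂ) ^ 2 + z ^ 2) ^ 2).re}
        ⊆ {z : ℂ | 0 ≤ (Complex.I * ((κ : ℂ) ^ 2 + z ^ 2) ^ 2).re} := by
      apply closure_minimal
      · intro z hz
        simp only [Set.mem_setOf_eq] at hz ⊢
        exact le_of_lt hz
      · apply isClosed_le continuous_const
        apply Complex.continuous_re.comp
        fun_prop
    constructor
    · -- differentiability
      intro l hl
      obtain ⟨hlc, hlnot⟩ := hl
      have hge : 0 ≤ (Complex.I * ((κ : ℂ) ^ 2 + l ^ 2) ^ 2).re := hclosure hlc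
      rw [re_formula] at hge
      set g : ℂ := l ^ 2 + 2 * (κ:ℂ) ^ 2 with hg
      set w : ℂ := g * Complex.exp (-(Complex.I * ε)) with hw
      have hmem : w ∈ Complex.slitPlane := by
        by_contra hns
        rw [Complex.mem_slitPlane_iff] at hns
        push_neg at hns
        obtain ⟨hre, him⟩ := hns
        have hre' : w.re ≤ 0 := hre
        -- g = w * exp(I ε)
        have hgw : g = w * Complex.exp (Complex.I * ε) := by
          rw [hw, mul_assoc, ← Complex.exp_add,
            show (-(Complex.I * (ε:ℂ)) + Complex.I * ε) = 0 by ring,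
            Complex.exp_zero, mul_one]
        have hEre : (Complex.exp (Complex.I * (ε:ℂ))).re = Real.cos ε := by
          rw [show Complex.I * (ε:ℂ) = (ε:ℂ) * Complex.I by ring, Complex.exp_ofReal_mul_I_re]
        have hEim : (Complex.exp (Complex.I * (ε:ℂ))).im = Real.sin ε := by
          rw [show Complex.I * (ε:ℂ) = (ε:ℂ) * Complex.I by ring, Complex.exp_ofReal_mul_I_im]
        have hgre : g.re = w.re * Real.cos ε := by
          rw [hgw, Complex.mul_re, hEre, hEim, him]; ring
        have hgim : g.im = w.re * Real.sin ε := by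
          rw [hgw, Complex.mul_im, hEre, hEim, him]; ring
        rcases lt_or_eq_of_le hre' with hlt | heq
        · -- w.re < 0 : contradiction with closure condition
          have hcos : 0 < Real.cos ε := Real.cos_pos_of_mem_Ioo ⟨by linarith, hεlt⟩
          have hsin : 0 < Real.sin ε := Real.sin_pos_of_pos_of_lt_pi hε0 (by linarith [Real.pi_pos])
          have hk2 : (0:ℝ) < κ ^ 2 := by positivity
          rw [hgre, hgim] at hge
          have hA : w.re * Real.cos ε - κ ^ 2 < 0 := by nlinarith
          have hB : w.re * Real.sin ε < 0 := mul_neg_of_neg_of_pos hlt hsin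
          nlinarith [mul_pos_of_neg_of_neg hA hB]
        · -- w = 0 : l is a branch point, excluded
          have hw0 : w = 0 := by
            apply Complex.ext <;> simp [← heq, him]
          have hg0 : g = 0 := by rw [hgw, hw0, zero_mul]
          set p : ℂ := Complex.I * ((Real.sqrt 2 * |κ| : ℝ) : ℂ) with hp
          have hp2 : p ^ 2 = -(2 * (κ:ℂ) ^ 2) := by
            rw [hp, mul_pow, Complex.I_sq, ← Complex.ofReal_pow,
              show (Real.sqrt 2 * |κ|) ^ 2 = 2 * κ ^ 2 by
                rw [mul_pow, Real.sq_sqrt (by norm_num : (0:ℝ) ≤ 2), _root_.sq_abs]]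
            push_cast; ring
          have hfac : (l - p) * (l + p) = 0 := by
            have : l ^ 2 + 2 * (κ:ℂ) ^ 2 = 0 := hg0
            linear_combination this - hp2
          rcases mul_eq_zero.mp hfac with h | h
          · rw [sub_eq_zero] at h
            exact hlnot (by simp [h])
          · have : l = -p := eq_neg_of_add_eq_zero_left h
            exact hlnot (by simp [this])
      -- now differentiability
      show DifferentiableAt ℂ (fun l => Complex.exp (Complex.I * ε / 2) * Complex.I *
        ((l ^ 2 + 2 * (κ : ℂ) ^ 2) * Complex.exp (-(Complex.I * ε))) ^ ((1 : ℂ) / 2)) l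
      apply DifferentiableAt.mul (differentiableAt_const _)
      exact DifferentiableAt.cpow
        (((differentiableAt_id.pow 2).add_const _).mul_const _)
        (differentiableAt_const _) hmem
    · -- imaginary part nonneg on D
      intro l hl
      have hlD : 0 < (Complex.I * ((κ : ℂ) ^ 2 + l ^ 2) ^ 2).re := hl
      rw [re_formula] at hlD
      set g : ℂ := l ^ 2 + 2 * (κ:ℂ) ^ 2 with hg
      set w : ℂ := g * Complex.exp (-(Complex.I * ε)) with hw
      set s : ℂ := w ^ ((1:ℂ)/2) with hs
      have hsre : 0 ≤ s.re := cpow_half_re_nonneg' w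
      have hs2 : s ^ 2 = w := cpow_half_sq' w
      have hgs : g = s ^ 2 * Complex.exp (Complex.I * ε) := by
        rw [hs2, hw, mul_assoc, ← Complex.exp_add,
          show (-(Complex.I * (ε:ℂ)) + Complex.I * ε) = 0 by ring,
          Complex.exp_zero, mul_one]
      set c : ℝ := Real.cos (ε/2) with hc
      set d : ℝ := Real.sin (ε/2) with hd
      have hcpos : 0 < c := Real.cos_pos_of_mem_Ioo ⟨by linarith, by linarith⟩
      have hdpos : 0 < d := Real.sin_pos_of_pos_of_lt_pi (by linarith) (by linarith [Real.pi_pos])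
      have hdc : d < c := by
        rw [hc, hd, ← Real.cos_pi_div_two_sub]
        apply Real.cos_lt_cos_of_nonneg_of_le_pi (by linarith) (by linarith [Real.pi_pos])
        linarith
      -- Im(nuRot) = c * s.re - d * s.im
      have hnuim : (nuRot κ ε l).im = c * s.re - d * s.im := by
        have hE : Complex.exp (Complex.I * (ε:ℂ) / 2) = Complex.exp (((ε/2 : ℝ):ℂ) * Complex.I) := by
          congr 1; push_cast; ring
        rw [show nuRot κ ε l = Complex.exp (Complex.I * ε / 2) * Complex.I * s from rfl, hE]
        rw [Complex.mul_im, Complex.mul_re, Complex.mul_im,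
          Complex.exp_ofReal_mul_I_re, Complex.exp_ofReal_mul_I_im,
          Complex.I_re, Complex.I_im]
        ring
      rw [hnuim]
      by_contra hcon
      push_neg at hcon
      -- double angle
      have harg : 2 * (ε/2) = ε := by ring
      have h2s := Real.sin_two_mul (ε/2)
      rw [harg] at h2s
      have hsin2 : Real.sin ε = 2 * d * c := by rw [hd, hc]; linarith [h2s]
      have h2c := Real.cos_two_mul (ε/2)
      rw [harg] at h2c
      have hpyth := Real.sin_sq_add_cos_sq (ε/2)
      have hcos2 : Real.cos ε = c ^ 2 - d ^ 2 := by rw [hd, hc]; nlinarith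
      have hEre : (Complex.exp (Complex.I * (ε:ℂ))).re = Real.cos ε := by
        rw [show Complex.I * (ε:ℂ) = (ε:ℂ) * Complex.I by ring, Complex.exp_ofReal_mul_I_re]
      have hEim : (Complex.exp (Complex.I * (ε:ℂ))).im = Real.sin ε := by
        rw [show Complex.I * (ε:ℂ) = (ε:ℂ) * Complex.I by ring, Complex.exp_ofReal_mul_I_im]
      clear_value s
      clear_value w
      clear_value g
      set x : ℝ := c * s.re - d * s.im with hx
      set y : ℝ := d * s.re + c * s.im with hy
      have hgre : g.re = x ^ 2 - y ^ 2 := by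
        rw [hgs, Complex.mul_re, hEre, hEim, hsin2, hcos2, pow_two, Complex.mul_re,
          Complex.mul_im, hx, hy]
        ring
      have hgim : g.im = 2 * x * y := by
        rw [hgs, Complex.mul_im, hEre, hEim, hsin2, hcos2, pow_two, Complex.mul_re,
          Complex.mul_im, hx, hy]
        ring
      -- derive contradiction
      have hxneg : x < 0 := hcon
      rw [hgre, hgim] at hlD
      clear hnuim hgs hs2 hEre hEim h2s h2c hpyth harg hclosure hl hκ hcon hgre hgim
      clear hsin2 hcos2 hε hε0 hεlt hc hd hg hw hs
      have hsipos : 0 < s.im := by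
        nlinarith [mul_nonneg hcpos.le hsre, hdpos]
      have hypos : 0 < y := by
        nlinarith [mul_pos hcpos hsipos, mul_nonneg hdpos.le hsre]
      have hxy : -x < y := by
        nlinarith [mul_pos (sub_pos.mpr hdc) hsipos,
          mul_nonneg (by linarith : (0:ℝ) ≤ c + d) hsre]
      have h1 : x ^ 2 - y ^ 2 - κ ^ 2 < 0 := by
        have hpn : (x + y) * (x - y) < 0 :=
          mul_neg_of_pos_of_neg (by linarith) (by linarith)
        nlinarith [hpn, sq_nonneg κ]
      have h2 : 2 * x * y < 0 := by
        have := mul_neg_of_neg_of_pos hxneg hypos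
        linarith
      nlinarith [mul_pos_of_neg_of_neg h1 h2]
end
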